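/- arXiv:1910.14523 — 7 statements merged into one kernel-verified Lean document; each statement's English description precedes it below -/
import Mathlib

section
/- Let z : ℝ² → ℝ be a smooth function satisfying the sine-Gordon equation z_{xt} = sin z, and let η ≠ 0 be a real number. Define ω₁ = (1/η) sin(z) dt, ω₂ = η dx + (1/η) cos(z) dt, ω₃ = z_x dx. Then the structure equations dω₁ = ω₃ ∧ ω₂, dω₂ = ω₁ ∧ ω₃, dω₃ = ω₁ ∧ ω₂ hold. Equivalently, writing ω_i = f_{i1} dx + f_{i2} dt, the identities ∂_t f_{11} − ∂_x f_{12} = f_{31} f_{22} − f_{32} f_{21}, ∂_t f_{21} − ∂_x f_{22} = f_{11} f_{32} − f_{12} f_{31}, ∂_t f_{31} − ∂_x f_{32} = f_{11} f_{22} − f_{12} f_{21} hold pointwise. -/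
/-- Partial derivative in the first variable `x`. -/
noncomputable def pdx (f : ℝ → ℝ → ℝ) (x t : ℝ) : ℝ := deriv (fun u => f u t) x
/-- Partial derivative in the second variable `t`. -/
noncomputable def pdt (f : ℝ → ℝ → ℝ) (x t : ℝ) : ℝ := deriv (fun s => f x s) t

/-- For a smooth solution `z` of the sine-Gordon equation `z_{xt} = sin z` and `η ≠ 0`,
the 1-forms `ω₁ = (1/η) sin z dt`, `ω₂ = η dx + (1/η) cos z dt`, `ω₃ = z_x dx`
(with coefficients `ω_i = f_{i1} dx + f_{i2} dt`) satisfy the structure equations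
`dω₁ = ω₃ ∧ ω₂`, `dω₂ = ω₁ ∧ ω₃`, `dω₃ = ω₁ ∧ ω₂`, written in coordinates as the
pointwise identities among the `f_{ij}` and their partial derivatives
(`dα = (∂ₓ q − ∂ₜ p) dx∧dt` for `α = p dx + q dt`, and
`α ∧ β = (p s − q r) dx∧dt` for `β = r dx + s dt`). -/
theorem sineGordon_structure_equations
    (z : ℝ → ℝ → ℝ) (hz : ContDiff ℝ (⊤ : ℕ∞) (fun p : ℝ × ℝ => z p.1 p.2))
    (η : ℝ) (hη : η ≠ 0)
    (hSG : ∀ x t, pdt (pdx z) x t = Real.sin (z x t)) :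
    ∀ x t : ℝ,
      -- dω₁ = ω₃ ∧ ω₂ :  f₁₁ = 0, f₁₂ = (1/η) sin z, f₃₁ = z_x, f₃₂ = 0
      pdx (fun a b => (1/η) * Real.sin (z a b)) x t - pdt (fun _ _ => (0:ℝ)) x t =
        pdx z x t * ((1/η) * Real.cos (z x t)) - 0 * η ∧
      -- dω₂ = ω₁ ∧ ω₃ :  f₂₁ = η, f₂₂ = (1/η) cos z
      pdx (fun a b => (1/η) * Real.cos (z a b)) x t - pdt (fun _ _ => η) x t =
        0 * (0:ℝ) - ((1/η) * Real.sin (z x t)) * pdx z x t ∧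
      -- dω₃ = ω₁ ∧ ω₂
      pdx (fun _ _ => (0:ℝ)) x t - pdt (pdx z) x t =
        0 * ((1/η) * Real.cos (z x t)) - ((1/η) * Real.sin (z x t)) * η := by
  intro x t
  have hdz : Differentiable ℝ (fun p : ℝ × ℝ => z p.1 p.2) := hz.differentiable (by simp)
  have hx : HasDerivAt (fun u => z u t) (pdx z x t) x := by
    have hd : DifferentiableAt ℝ (fun u => z u t) x :=
      (hdz.comp (differentiable_id.prodMk (differentiable_const t))) x
    exact hd.hasDerivAt
  refine ⟨?_, ?_, ?_⟩
  · have h1 : HasDerivAt (fun u => (1/η) * Real.sin (z u t))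
        ((1/η) * (Real.cos (z x t) * pdx z x t)) x := hx.sin.const_mul _
    show deriv (fun u => (1/η) * Real.sin (z u t)) x - deriv (fun _ => (0:ℝ)) t = _
    rw [h1.deriv, deriv_const]
    ring
  · have h2 : HasDerivAt (fun u => (1/η) * Real.cos (z u t))
        ((1/η) * (-Real.sin (z x t) * pdx z x t)) x := hx.cos.const_mul _
    show deriv (fun u => (1/η) * Real.cos (z u t)) x - deriv (fun _ => η) t = _
    rw [h2.deriv, deriv_const]
    ring
  · show deriv (fun _ => (0:ℝ)) x - pdt (pdx z) x t = _
    rw [deriv_const, hSG x t]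
    field_simp
    ring
end

section
/- With h, ℓ, Δ₀ as above and G := ψ₂₁ψ₂₂ − ψ₃₁ψ₃₂, one has the identity −∂ℓ/∂z_x + ∂h/∂z_t = G'(z)/Δ₀(z), where G' is the z-derivative of G. -/
/-- With `h, ℓ` as in Proposition 1 and `G = ψ₂₁ψ₂₂ − ψ₃₁ψ₃₂`, one has
`−∂ℓ/∂z_x + ∂h/∂z_t = G'(z)/Δ₀(z)`. -/
theorem minus_lzx_plus_hzt_eq_Gprime_div_Delta
    (ψ21 ψ22 ψ31 ψ32 : ℝ → ℝ)
    (hψ21 : ContDiff ℝ (⊤ : ℕ∞) ψ21) (hψ22 : ContDiff ℝ (⊤ : ℕ∞) ψ22)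
    (hψ31 : ContDiff ℝ (⊤ : ℕ∞) ψ31) (hψ32 : ContDiff ℝ (⊤ : ℕ∞) ψ32)
    (hΔ : ∀ s, ψ32 s * ψ21 s - ψ31 s * ψ22 s ≠ 0)
    (h l : ℝ → ℝ → ℝ → ℝ)
    (hh : ∀ s p q, h s p q = (1 / (ψ32 s * ψ21 s - ψ31 s * ψ22 s)) *
      ((-ψ21 s * deriv ψ21 s + ψ31 s * deriv ψ31 s) * p +
        (ψ21 s * deriv ψ22 s - ψ31 s * deriv ψ32 s) * q))
    (hl : ∀ s p q, l s p q = (1 / (ψ32 s * ψ21 s - ψ31 s * ψ22 s)) *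
      ((-ψ22 s * deriv ψ21 s + ψ32 s * deriv ψ31 s) * p +
        (ψ22 s * deriv ψ22 s - ψ32 s * deriv ψ32 s) * q)) :
    ∀ s p q : ℝ,
      -deriv (fun p' => l s p' q) p + deriv (fun q' => h s p q') q =
        deriv (fun u => ψ21 u * ψ22 u - ψ31 u * ψ32 u) s /
          (ψ32 s * ψ21 s - ψ31 s * ψ22 s) := by
  intro s p q
  have d21 := (hψ21.differentiable (by simp)) s
  have d22 := (hψ22.differentiable (by simp)) s
  have d31 := (hψ31.differentiable (by simp)) s
  have d32 := (hψ32.differentiable (by simp)) s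
  have hG : deriv (fun u => ψ21 u * ψ22 u - ψ31 u * ψ32 u) s =
      deriv ψ21 s * ψ22 s + ψ21 s * deriv ψ22 s -
        (deriv ψ31 s * ψ32 s + ψ31 s * deriv ψ32 s) := by
    rw [deriv_fun_sub (d21.fun_mul d22) (d31.fun_mul d32), deriv_fun_mul d21 d22, deriv_fun_mul d31 d32]
  have hlderiv : deriv (fun p' => l s p' q) p =
      (1 / (ψ32 s * ψ21 s - ψ31 s * ψ22 s)) *
        (-ψ22 s * deriv ψ21 s + ψ32 s * deriv ψ31 s) := by
    have : (fun p' => l s p' q) = fun p' =>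
        ((1 / (ψ32 s * ψ21 s - ψ31 s * ψ22 s)) *
          (-ψ22 s * deriv ψ21 s + ψ32 s * deriv ψ31 s)) * p' +
        ((1 / (ψ32 s * ψ21 s - ψ31 s * ψ22 s)) *
          (ψ22 s * deriv ψ22 s - ψ32 s * deriv ψ32 s) * q) := by
      funext p'; rw [hl]; ring
    rw [this]
    simp [deriv_add, deriv_const_mul_field (v := fun x : ℝ => x)]
  have hhderiv : deriv (fun q' => h s p q') q =
      (1 / (ψ32 s * ψ21 s - ψ31 s * ψ22 s)) *
        (ψ21 s * deriv ψ22 s - ψ31 s * deriv ψ32 s) := by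
    have : (fun q' => h s p q') = fun q' =>
        ((1 / (ψ32 s * ψ21 s - ψ31 s * ψ22 s)) *
          (ψ21 s * deriv ψ22 s - ψ31 s * deriv ψ32 s)) * q' +
        ((1 / (ψ32 s * ψ21 s - ψ31 s * ψ22 s)) *
          (-ψ21 s * deriv ψ21 s + ψ31 s * deriv ψ31 s) * p) := by
      funext q'; rw [hh]; ring
    rw [this]
    simp [deriv_add, deriv_const_mul_field (v := fun x : ℝ => x)]
  rw [hlderiv, hhderiv, hG]
  field_simp
  ring
end

section
/- Let ω₁ = ℓ dx + h dt and ω₂ = ψ₂₂ dx + ψ₂₁ dt with h, ℓ as in Proposition 1. Then the coefficient of dx ∧ dt in ω₁ ∧ ω₂ satisfies the identity ℓψ₂₁ − hψ₂₂ = ψ₃₁' z_x − ψ₃₂' z_t, and hence ω₁ ∧ ω₂ is not identically zero on generic solutions (generic z_x, z_t) if and only if (ψ₃₁')² + (ψ₃₂')² ≠ 0. -/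
/-- The coefficient of `dx ∧ dt` in `ω₁ ∧ ω₂`, namely `ℓψ₂₁ − hψ₂₂`, equals
`ψ₃₁' z_x − ψ₃₂' z_t`; hence it is not identically zero in the jet variables
iff `(ψ₃₁')² + (ψ₃₂')² ≠ 0`. -/
theorem omega1_wedge_omega2_coefficient
    (ψ21 ψ22 ψ31 ψ32 : ℝ → ℝ)
    (hψ21 : ContDiff ℝ (⊤ : ℕ∞) ψ21) (hψ22 : ContDiff ℝ (⊤ : ℕ∞) ψ22)
    (hψ31 : ContDiff ℝ (⊤ : ℕ∞) ψ31) (hψ32 : ContDiff ℝ (⊤ : ℕ∞) ψ32)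
    (hΔ : ∀ s, ψ32 s * ψ21 s - ψ31 s * ψ22 s ≠ 0)
    (h l : ℝ → ℝ → ℝ → ℝ)
    (hh : ∀ s p q, h s p q = (1 / (ψ32 s * ψ21 s - ψ31 s * ψ22 s)) *
      ((-ψ21 s * deriv ψ21 s + ψ31 s * deriv ψ31 s) * p +
        (ψ21 s * deriv ψ22 s - ψ31 s * deriv ψ32 s) * q))
    (hl : ∀ s p q, l s p q = (1 / (ψ32 s * ψ21 s - ψ31 s * ψ22 s)) *
      ((-ψ22 s * deriv ψ21 s + ψ32 s * deriv ψ31 s) * p +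
        (ψ22 s * deriv ψ22 s - ψ32 s * deriv ψ32 s) * q)) :
    (∀ s p q : ℝ,
        l s p q * ψ21 s - h s p q * ψ22 s = deriv ψ31 s * p - deriv ψ32 s * q) ∧
    (∀ s : ℝ,
        (∃ p q : ℝ, l s p q * ψ21 s - h s p q * ψ22 s ≠ 0) ↔
          (deriv ψ31 s) ^ 2 + (deriv ψ32 s) ^ 2 ≠ 0) := by
  have key : ∀ s p q : ℝ,
      l s p q * ψ21 s - h s p q * ψ22 s = deriv ψ31 s * p - deriv ψ32 s * q := by
    intro s p q
    rw [hl, hh]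
    field_simp [hΔ s]
    ring
  refine ⟨key, fun s => ?_⟩
  constructor
  · rintro ⟨p, q, hne⟩ hsum
    rw [key] at hne
    have h1 : deriv ψ31 s = 0 := by nlinarith [sq_nonneg (deriv ψ31 s), sq_nonneg (deriv ψ32 s)]
    have h2 : deriv ψ32 s = 0 := by nlinarith [sq_nonneg (deriv ψ31 s), sq_nonneg (deriv ψ32 s)]
    simp [h1, h2] at hne
  · intro hsum
    refine ⟨deriv ψ31 s, -deriv ψ32 s, ?_⟩
    rw [key]
    intro hc
    apply hsum
    nlinarith
end

section
/- Let ψ be smooth with ψ' ≠ 0, m₁ ≠ 0, 2m₁ψ + m₂ > 0, λ ≠ 0. Let z be a smooth function on an open subset of ℝ² satisfying z_{xt} = ψ z_{xx} − (ψ''/ψ' − m₁ψ'/(2m₁ψ+m₂)) z_x z_t + (ψψ''/ψ' + ψ'(m₁ψ+m₂)/(2m₁ψ+m₂)) z_x² + (2m₁ψ+m₂)/ψ'. Then the 1-forms ω₁ = (λψ'/√(2m₁ψ+m₂)) z_x (dx + ψ dt), ω₂ = λ dx + (λψ + m₁/λ) dt, ω₃ = √(2m₁ψ+m₂) dt satisfy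 the three structure equations dω₁ = ω₃ ∧ ω₂, dω₂ = ω₁ ∧ ω₃, dω₃ = ω₁ ∧ ω₂. -/
set_option maxHeartbeats 1000000

/-- Corollary 1: if `z` solves equation (4a) then the 1-forms
`ω₁ = (λψ'/√(2m₁ψ+m₂)) z_x (dx + ψ dt)`, `ω₂ = λ dx + (λψ + m₁/λ) dt`,
`ω₃ = √(2m₁ψ+m₂) dt` satisfy `dω₁ = ω₃∧ω₂`, `dω₂ = ω₁∧ω₃`, `dω₃ = ω₁∧ω₂`
(coordinate identities, `dα = (∂ₓ q − ∂ₜ p) dx∧dt`, `α∧β = (ps − qr) dx∧dt`). -/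
theorem corollary1_pss_structure_equations
    (ψ : ℝ → ℝ) (hψ : ContDiff ℝ (⊤ : ℕ∞) ψ) (m₁ m₂ lam : ℝ)
    (hm₁ : m₁ ≠ 0) (hlam : lam ≠ 0)
    (hψ' : ∀ s, deriv ψ s ≠ 0)
    (hpos : ∀ s, 2 * m₁ * ψ s + m₂ > 0)
    (z : ℝ → ℝ → ℝ) (hz : ContDiff ℝ (⊤ : ℕ∞) (fun p : ℝ × ℝ => z p.1 p.2))
    (heq : ∀ x t, pdt (pdx z) x t =
      ψ (z x t) * pdx (pdx z) x t
      - (deriv (deriv ψ) (z x t) / deriv ψ (z x t)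
          - m₁ * deriv ψ (z x t) / (2 * m₁ * ψ (z x t) + m₂)) * pdx z x t * pdt z x t
      + (ψ (z x t) * deriv (deriv ψ) (z x t) / deriv ψ (z x t)
          + deriv ψ (z x t) * (m₁ * ψ (z x t) + m₂) / (2 * m₁ * ψ (z x t) + m₂))
          * (pdx z x t) ^ 2
      + (2 * m₁ * ψ (z x t) + m₂) / deriv ψ (z x t)) :
    ∀ x t : ℝ,
      -- dω₁ = ω₃ ∧ ω₂ :  f₁₁ = λψ' z_x/√, f₁₂ = f₁₁·ψ, f₃₁ = 0, f₃₂ = √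
      pdx (fun a b => lam * deriv ψ (z a b) / Real.sqrt (2 * m₁ * ψ (z a b) + m₂)
            * pdx z a b * ψ (z a b)) x t
        - pdt (fun a b => lam * deriv ψ (z a b) / Real.sqrt (2 * m₁ * ψ (z a b) + m₂)
            * pdx z a b) x t
        = 0 * (lam * ψ (z x t) + m₁ / lam) - Real.sqrt (2 * m₁ * ψ (z x t) + m₂) * lam ∧
      -- dω₂ = ω₁ ∧ ω₃
      pdx (fun a b => lam * ψ (z a b) + m₁ / lam) x t - pdt (fun _ _ => lam) x t
        = (lam * deriv ψ (z x t) / Real.sqrt (2 * m₁ * ψ (z x t) + m₂) * pdx z x t)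
            * Real.sqrt (2 * m₁ * ψ (z x t) + m₂)
          - (lam * deriv ψ (z x t) / Real.sqrt (2 * m₁ * ψ (z x t) + m₂) * pdx z x t
              * ψ (z x t)) * 0 ∧
      -- dω₃ = ω₁ ∧ ω₂
      pdx (fun a b => Real.sqrt (2 * m₁ * ψ (z a b) + m₂)) x t - pdt (fun _ _ => (0:ℝ)) x t
        = (lam * deriv ψ (z x t) / Real.sqrt (2 * m₁ * ψ (z x t) + m₂) * pdx z x t)
            * (lam * ψ (z x t) + m₁ / lam)
          - (lam * deriv ψ (z x t) / Real.sqrt (2 * m₁ * ψ (z x t) + m₂) * pdx z x t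
              * ψ (z x t)) * lam := by
  -- smoothness facts
  have hψd : Differentiable ℝ ψ := hψ.differentiable (by simp)
  have hψ'd : Differentiable ℝ (deriv ψ) :=
    ((contDiff_infty_iff_deriv.mp (hψ.of_le (by simp))).2).differentiable (by simp)
  have hZd : Differentiable ℝ (fun p : ℝ × ℝ => z p.1 p.2) := hz.differentiable (by simp)
  have hZXC : ContDiff ℝ (⊤ : ℕ∞) (fun p : ℝ × ℝ => fderiv ℝ (fun q : ℝ × ℝ => z q.1 q.2) p (1, 0)) :=
    (hz.fderiv_right (by simp)).clm_apply contDiff_const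
  have hpdx_eq : ∀ a b : ℝ, pdx z a b = fderiv ℝ (fun q : ℝ × ℝ => z q.1 q.2) (a, b) (1, 0) := by
    intro a b
    have h1 : HasDerivAt (fun u : ℝ => (u, b)) ((1 : ℝ), (0 : ℝ)) a :=
      (hasDerivAt_id a).prodMk (hasDerivAt_const a b)
    have h2 := ((hZd (a, b)).hasFDerivAt).comp_hasDerivAt a h1
    exact h2.deriv
  intro x t
  -- basic first derivatives
  have hdiffx : DifferentiableAt ℝ (fun a => z a t) x := by
    have : Differentiable ℝ (fun a : ℝ => z a t) :=
      hZd.comp (differentiable_id.prodMk (differentiable_const t))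
    exact this x
  have hdifft : DifferentiableAt ℝ (fun b => z x b) t := by
    have : Differentiable ℝ (fun b : ℝ => z x b) :=
      hZd.comp ((differentiable_const x).prodMk differentiable_id)
    exact this t
  have hza : HasDerivAt (fun a => z a t) (pdx z x t) x := hdiffx.hasDerivAt
  have hzb : HasDerivAt (fun b => z x b) (pdt z x t) t := hdifft.hasDerivAt
  -- second derivatives of z via the smooth fderiv representative
  have hZXa : HasDerivAt (fun a => pdx z a t) (pdx (pdx z) x t) x := by
    have hfun : (fun a => pdx z a t)
        = fun a => fderiv ℝ (fun q : ℝ × ℝ => z q.1 q.2) (a, t) (1, 0) :=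
      funext fun a => hpdx_eq a t
    have hd : DifferentiableAt ℝ
        (fun a => fderiv ℝ (fun q : ℝ × ℝ => z q.1 q.2) (a, t) (1, 0)) x :=
      ((hZXC.differentiable (by simp)).comp (differentiable_id.prodMk (differentiable_const t))) x
    have hval : pdx (pdx z) x t
        = deriv (fun a => fderiv ℝ (fun q : ℝ × ℝ => z q.1 q.2) (a, t) (1, 0)) x := by
      show deriv (fun a => pdx z a t) x = _
      rw [hfun]
    rw [hval, hfun]
    exact hd.hasDerivAt
  have hZXb : HasDerivAt (fun b => pdx z x b) (pdt (pdx z) x t) t := by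
    have hfun : (fun b => pdx z x b)
        = fun b => fderiv ℝ (fun q : ℝ × ℝ => z q.1 q.2) (x, b) (1, 0) :=
      funext fun b => hpdx_eq x b
    have hd : DifferentiableAt ℝ
        (fun b => fderiv ℝ (fun q : ℝ × ℝ => z q.1 q.2) (x, b) (1, 0)) t :=
      ((hZXC.differentiable (by simp)).comp ((differentiable_const x).prodMk differentiable_id)) t
    have hval : pdt (pdx z) x t
        = deriv (fun b => fderiv ℝ (fun q : ℝ × ℝ => z q.1 q.2) (x, b) (1, 0)) t := by
      show deriv (fun b => pdx z x b) t = _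
      rw [hfun]
    rw [hval, hfun]
    exact hd.hasDerivAt
  -- positivity facts at the point
  have hQpos : 2 * m₁ * ψ (z x t) + m₂ > 0 := hpos (z x t)
  have hQ0 : 2 * m₁ * ψ (z x t) + m₂ ≠ 0 := ne_of_gt hQpos
  have hS0 : Real.sqrt (2 * m₁ * ψ (z x t) + m₂) ≠ 0 :=
    (Real.sqrt_pos.mpr hQpos).ne'
  have hS2 : Real.sqrt (2 * m₁ * ψ (z x t) + m₂) ^ 2 = 2 * m₁ * ψ (z x t) + m₂ :=
    Real.sq_sqrt hQpos.le
  have hP'0 : deriv ψ (z x t) ≠ 0 := hψ' (z x t)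
  -- composed derivatives in the x-direction
  have hψa : HasDerivAt (fun a => ψ (z a t)) (deriv ψ (z x t) * pdx z x t) x :=
    (hψd (z x t)).hasDerivAt.comp x hza
  have hψ'a : HasDerivAt (fun a => deriv ψ (z a t))
      (deriv (deriv ψ) (z x t) * pdx z x t) x :=
    (hψ'd (z x t)).hasDerivAt.comp (h₂ := deriv ψ) x hza
  have hQa : HasDerivAt (fun a => 2 * m₁ * ψ (z a t) + m₂)
      (2 * m₁ * (deriv ψ (z x t) * pdx z x t)) x :=
    (hψa.const_mul (2 * m₁)).add_const m₂
  have hSa : HasDerivAt (fun a => Real.sqrt (2 * m₁ * ψ (z a t) + m₂))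
      (1 / (2 * Real.sqrt (2 * m₁ * ψ (z x t) + m₂))
        * (2 * m₁ * (deriv ψ (z x t) * pdx z x t))) x :=
    (Real.hasDerivAt_sqrt hQ0).comp x hQa
  have hAa : HasDerivAt
      (fun a => lam * deriv ψ (z a t) / Real.sqrt (2 * m₁ * ψ (z a t) + m₂))
      ((lam * (deriv (deriv ψ) (z x t) * pdx z x t) * Real.sqrt (2 * m₁ * ψ (z x t) + m₂)
          - lam * deriv ψ (z x t)
            * (1 / (2 * Real.sqrt (2 * m₁ * ψ (z x t) + m₂))
                * (2 * m₁ * (deriv ψ (z x t) * pdx z x t))))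
        / Real.sqrt (2 * m₁ * ψ (z x t) + m₂) ^ 2) x :=
    (hψ'a.const_mul lam).div hSa hS0
  -- composed derivatives in the t-direction
  have hψb : HasDerivAt (fun b => ψ (z x b)) (deriv ψ (z x t) * pdt z x t) t :=
    (hψd (z x t)).hasDerivAt.comp t hzb
  have hψ'b : HasDerivAt (fun b => deriv ψ (z x b))
      (deriv (deriv ψ) (z x t) * pdt z x t) t :=
    (hψ'd (z x t)).hasDerivAt.comp (h₂ := deriv ψ) t hzb
  have hQb : HasDerivAt (fun b => 2 * m₁ * ψ (z x b) + m₂)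
      (2 * m₁ * (deriv ψ (z x t) * pdt z x t)) t :=
    (hψb.const_mul (2 * m₁)).add_const m₂
  have hSb : HasDerivAt (fun b => Real.sqrt (2 * m₁ * ψ (z x b) + m₂))
      (1 / (2 * Real.sqrt (2 * m₁ * ψ (z x t) + m₂))
        * (2 * m₁ * (deriv ψ (z x t) * pdt z x t))) t :=
    (Real.hasDerivAt_sqrt hQ0).comp t hQb
  have hAb : HasDerivAt
      (fun b => lam * deriv ψ (z x b) / Real.sqrt (2 * m₁ * ψ (z x b) + m₂))
      ((lam * (deriv (deriv ψ) (z x t) * pdt z x t) * Real.sqrt (2 * m₁ * ψ (z x t) + m₂)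
          - lam * deriv ψ (z x t)
            * (1 / (2 * Real.sqrt (2 * m₁ * ψ (z x t) + m₂))
                * (2 * m₁ * (deriv ψ (z x t) * pdt z x t))))
        / Real.sqrt (2 * m₁ * ψ (z x t) + m₂) ^ 2) t :=
    (hψ'b.const_mul lam).div hSb hS0
  refine ⟨?_, ?_, ?_⟩
  · -- dω₁ = ω₃ ∧ ω₂
    have hD1 := ((hAa.mul hZXa).mul hψa).deriv
    have hD2 := (hAb.mul hZXb).deriv
    simp only [Pi.mul_def] at hD1 hD2
    show deriv (fun a => lam * deriv ψ (z a t) / Real.sqrt (2 * m₁ * ψ (z a t) + m₂)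
          * pdx z a t * ψ (z a t)) x
        - deriv (fun b => lam * deriv ψ (z x b) / Real.sqrt (2 * m₁ * ψ (z x b) + m₂)
          * pdx z x b) t = _
    rw [hD1, hD2, heq x t]
    clear hD1 hD2 hAa hAb hSa hSb hQa hQb hψa hψb hψ'a hψ'b hza hzb hZXa hZXb
    set zx := pdx z x t with hzx
    set zt := pdt z x t with hzt
    set zxx := pdx (pdx z) x t with hzxx
    set P := ψ (z x t) with hP
    set P' := deriv ψ (z x t) with hP'
    set P'' := deriv (deriv ψ) (z x t) with hP''
    set S := Real.sqrt (2 * m₁ * P + m₂) with hS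
    clear_value zx zt zxx P P' P'' S
    rw [show m₂ = S ^ 2 - 2 * m₁ * P from by linarith [hS2]]
    field_simp
    ring
  · -- dω₂ = ω₁ ∧ ω₃
    have hD1 := ((hψa.const_mul lam).add_const (m₁ / lam)).deriv
    show deriv (fun a => lam * ψ (z a t) + m₁ / lam) x - deriv (fun _ : ℝ => lam) t = _
    rw [hD1, deriv_const]
    field_simp
    ring
  · -- dω₃ = ω₁ ∧ ω₂
    show deriv (fun a => Real.sqrt (2 * m₁ * ψ (z a t) + m₂)) x
        - deriv (fun _ : ℝ => (0 : ℝ)) t = _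
    rw [hSa.deriv, deriv_const]
    field_simp
    ring
end

section
/- Let ψ, m₁, m₂, λ be as in Corollary 1 and let z be a smooth solution of equation (4a) with z_x ≠ 0. Define ω₁, ω₂, ω₃ as in Corollary 1, and set a = −2√(2m₁ψ+m₂)/(ψ' z_x), b = 1, c = 0, ω₁₃ = a ω₁ + b ω₂, ω₂₃ = b ω₁ + c ω₂. Then ac − b² = −1, dω₁₃ = ω₃ ∧ ω₂₃ and dω₂₃ = −ω₃ ∧ ω₁₃, i.e., the Gauss–Codazzi equations hold and the pseudospherical metric I = ω₁² + ω₂² along z admits a local isometric immersion into ℝ³ with second fundamental form coefficients a, b, c depending on the first-order jet of z. -/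
lemma pdx_eq_fderiv (z : ℝ → ℝ → ℝ) (hz : ContDiff ℝ (⊤ : ℕ∞) (fun p : ℝ × ℝ => z p.1 p.2))
    (x t : ℝ) :
    HasDerivAt (fun a => z a t) (fderiv ℝ (fun p : ℝ × ℝ => z p.1 p.2) (x, t) (1, 0)) x := by
  have h1 : HasDerivAt (fun u : ℝ => ((u, t) : ℝ × ℝ)) ((1 : ℝ), (0 : ℝ)) x :=
    (hasDerivAt_id x).prodMk (hasDerivAt_const x t)
  exact ((hz.differentiable (by simp) (x, t)).hasFDerivAt).comp_hasDerivAt x h1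

lemma pdt_eq_fderiv (z : ℝ → ℝ → ℝ) (hz : ContDiff ℝ (⊤ : ℕ∞) (fun p : ℝ × ℝ => z p.1 p.2))
    (x t : ℝ) :
    HasDerivAt (fun s => z x s) (fderiv ℝ (fun p : ℝ × ℝ => z p.1 p.2) (x, t) (0, 1)) t := by
  have h1 : HasDerivAt (fun s : ℝ => ((x, s) : ℝ × ℝ)) ((0 : ℝ), (1 : ℝ)) t :=
    (hasDerivAt_const t x).prodMk (hasDerivAt_id t)
  exact ((hz.differentiable (by simp) (x, t)).hasFDerivAt).comp_hasDerivAt t h1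

lemma hasDerivAt_pdx (z : ℝ → ℝ → ℝ) (hz : ContDiff ℝ (⊤ : ℕ∞) (fun p : ℝ × ℝ => z p.1 p.2))
    (x t : ℝ) : HasDerivAt (fun a => z a t) (pdx z x t) x := by
  have h := pdx_eq_fderiv z hz x t
  have h2 : pdx z x t = fderiv ℝ (fun p : ℝ × ℝ => z p.1 p.2) (x, t) (1, 0) := h.deriv
  rw [h2]; exact h

lemma hasDerivAt_pdt (z : ℝ → ℝ → ℝ) (hz : ContDiff ℝ (⊤ : ℕ∞) (fun p : ℝ × ℝ => z p.1 p.2))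
    (x t : ℝ) : HasDerivAt (fun s => z x s) (pdt z x t) t := by
  have h := pdt_eq_fderiv z hz x t
  have h2 : pdt z x t = fderiv ℝ (fun p : ℝ × ℝ => z p.1 p.2) (x, t) (0, 1) := h.deriv
  rw [h2]; exact h

lemma contDiff_uncurry_pdx (z : ℝ → ℝ → ℝ)
    (hz : ContDiff ℝ (⊤ : ℕ∞) (fun p : ℝ × ℝ => z p.1 p.2)) :
    ContDiff ℝ (⊤ : ℕ∞) (fun p : ℝ × ℝ => pdx z p.1 p.2) := by
  have h : ContDiff ℝ (⊤ : ℕ∞) (fun p : ℝ × ℝ =>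
      fderiv ℝ (fun q : ℝ × ℝ => z q.1 q.2) p ((1 : ℝ), (0 : ℝ))) :=
    (hz.fderiv_right (by simp)).clm_apply contDiff_const
  have e : (fun p : ℝ × ℝ => pdx z p.1 p.2) = fun p : ℝ × ℝ =>
      fderiv ℝ (fun q : ℝ × ℝ => z q.1 q.2) p ((1 : ℝ), (0 : ℝ)) := by
    funext p
    exact (pdx_eq_fderiv z hz p.1 p.2).deriv
  rw [e]; exact h


/-- Proposition 2: for a solution `z` of (4a) with `z_x ≠ 0`, setting
`a = −2√(2m₁ψ+m₂)/(ψ' z_x)`, `b = 1`, `c = 0`, `ω₁₃ = a ω₁ + b ω₂`, `ω₂₃ = b ω₁ + c ω₂`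
(with `ω₁, ω₂, ω₃` as in Corollary 1), the Gauss equation `ac − b² = −1` and the
Codazzi equations `dω₁₃ = ω₃ ∧ ω₂₃`, `dω₂₃ = −ω₃ ∧ ω₁₃` hold; so the pseudospherical
metric `I = ω₁² + ω₂²` admits a local isometric immersion in `ℝ³` with `a, b, c`
depending on the first-order jet of `z`. -/
theorem proposition2_finite_order_immersion
    (ψ : ℝ → ℝ) (hψ : ContDiff ℝ (⊤ : ℕ∞) ψ) (m₁ m₂ lam : ℝ)
    (hm₁ : m₁ ≠ 0) (hlam : lam ≠ 0)
    (hψ' : ∀ s, deriv ψ s ≠ 0)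
    (hpos : ∀ s, 2 * m₁ * ψ s + m₂ > 0)
    (z : ℝ → ℝ → ℝ) (hz : ContDiff ℝ (⊤ : ℕ∞) (fun p : ℝ × ℝ => z p.1 p.2))
    (hzx : ∀ x t, pdx z x t ≠ 0)
    (heq : ∀ x t, pdt (pdx z) x t =
      ψ (z x t) * pdx (pdx z) x t
      - (deriv (deriv ψ) (z x t) / deriv ψ (z x t)
          - m₁ * deriv ψ (z x t) / (2 * m₁ * ψ (z x t) + m₂)) * pdx z x t * pdt z x t
      + (ψ (z x t) * deriv (deriv ψ) (z x t) / deriv ψ (z x t)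
          + deriv ψ (z x t) * (m₁ * ψ (z x t) + m₂) / (2 * m₁ * ψ (z x t) + m₂))
          * (pdx z x t) ^ 2
      + (2 * m₁ * ψ (z x t) + m₂) / deriv ψ (z x t)) :
    ∀ x t : ℝ,
      -- ac − b² = −1 with a = −2√(2m₁ψ+m₂)/(ψ' z_x), b = 1, c = 0
      (-2 * Real.sqrt (2 * m₁ * ψ (z x t) + m₂) / (deriv ψ (z x t) * pdx z x t)) * 0
        - (1 : ℝ) ^ 2 = -1 ∧
      -- dω₁₃ = ω₃ ∧ ω₂₃ :  ω₁₃ = a ω₁ + ω₂, ω₂₃ = ω₁, ω₃ = √(2m₁ψ+m₂) dt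
      pdx (fun a b =>
          (-2 * Real.sqrt (2 * m₁ * ψ (z a b) + m₂) / (deriv ψ (z a b) * pdx z a b))
            * (lam * deriv ψ (z a b) / Real.sqrt (2 * m₁ * ψ (z a b) + m₂)
                * pdx z a b * ψ (z a b))
          + (lam * ψ (z a b) + m₁ / lam)) x t
        - pdt (fun a b =>
          (-2 * Real.sqrt (2 * m₁ * ψ (z a b) + m₂) / (deriv ψ (z a b) * pdx z a b))
            * (lam * deriv ψ (z a b) / Real.sqrt (2 * m₁ * ψ (z a b) + m₂) * pdx z a b)
          + lam) x t
        = 0 * (lam * deriv ψ (z x t) / Real.sqrt (2 * m₁ * ψ (z x t) + m₂)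
                * pdx z x t * ψ (z x t))
          - Real.sqrt (2 * m₁ * ψ (z x t) + m₂) *
              (lam * deriv ψ (z x t) / Real.sqrt (2 * m₁ * ψ (z x t) + m₂) * pdx z x t) ∧
      -- dω₂₃ = −ω₃ ∧ ω₁₃
      pdx (fun a b => lam * deriv ψ (z a b) / Real.sqrt (2 * m₁ * ψ (z a b) + m₂)
            * pdx z a b * ψ (z a b)) x t
        - pdt (fun a b => lam * deriv ψ (z a b) / Real.sqrt (2 * m₁ * ψ (z a b) + m₂)
            * pdx z a b) x t
        = -(0 * ((-2 * Real.sqrt (2 * m₁ * ψ (z x t) + m₂) / (deriv ψ (z x t) * pdx z x t))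
                  * (lam * deriv ψ (z x t) / Real.sqrt (2 * m₁ * ψ (z x t) + m₂)
                      * pdx z x t * ψ (z x t))
                + (lam * ψ (z x t) + m₁ / lam))
            - Real.sqrt (2 * m₁ * ψ (z x t) + m₂) *
                ((-2 * Real.sqrt (2 * m₁ * ψ (z x t) + m₂) / (deriv ψ (z x t) * pdx z x t))
                  * (lam * deriv ψ (z x t) / Real.sqrt (2 * m₁ * ψ (z x t) + m₂) * pdx z x t)
                + lam)) := by
  intro x t
  have hz1 := contDiff_uncurry_pdx z hz
  have hψd : Differentiable ℝ ψ := hψ.differentiable (by simp)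
  have hψ'c : ContDiff ℝ (⊤ : ℕ∞) (deriv ψ) := by
    have h : ContDiff ℝ (⊤ : ℕ∞) (fun y => fderiv ℝ ψ y 1) :=
      (hψ.fderiv_right (by simp)).clm_apply contDiff_const
    exact h
  have hψ'd : Differentiable ℝ (deriv ψ) := hψ'c.differentiable (by simp)
  have hx1 : HasDerivAt (fun a => z a t) (pdx z x t) x := hasDerivAt_pdx z hz x t
  have ht1 : HasDerivAt (fun s => z x s) (pdt z x t) t := hasDerivAt_pdt z hz x t
  have hx2 : HasDerivAt (fun a => pdx z a t) (pdx (pdx z) x t) x :=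
    hasDerivAt_pdx (pdx z) hz1 x t
  have ht2 : HasDerivAt (fun s => pdx z x s) (pdt (pdx z) x t) t :=
    hasDerivAt_pdt (pdx z) hz1 x t
  have hRpos : ∀ a b, (0:ℝ) < Real.sqrt (2 * m₁ * ψ (z a b) + m₂) :=
    fun a b => Real.sqrt_pos.mpr (hpos _)
  have hRne : Real.sqrt (2 * m₁ * ψ (z x t) + m₂) ≠ 0 := (hRpos x t).ne'
  -- ψ ∘ z derivatives
  have hψzx : HasDerivAt (fun a => ψ (z a t)) (deriv ψ (z x t) * pdx z x t) x :=
    (hψd (z x t)).hasDerivAt.comp x hx1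
  have hψzt : HasDerivAt (fun s => ψ (z x s)) (deriv ψ (z x t) * pdt z x t) t :=
    (hψd (z x t)).hasDerivAt.comp t ht1
  have hψ'zx : HasDerivAt (fun a => deriv ψ (z a t)) (deriv (deriv ψ) (z x t) * pdx z x t) x :=
    by have := (hψ'd (z x t)).hasDerivAt.comp x hx1; exact this
  have hψ'zt : HasDerivAt (fun s => deriv ψ (z x s)) (deriv (deriv ψ) (z x t) * pdt z x t) t :=
    (hψ'd (z x t)).hasDerivAt.comp t ht1
  have hgx : HasDerivAt (fun a => 2 * m₁ * ψ (z a t) + m₂)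
      (2 * m₁ * (deriv ψ (z x t) * pdx z x t)) x := by
    have := (hψzx.const_mul (2 * m₁)).add_const m₂
    simpa [mul_assoc] using this
  have hgt : HasDerivAt (fun s => 2 * m₁ * ψ (z x s) + m₂)
      (2 * m₁ * (deriv ψ (z x t) * pdt z x t)) t := by
    have := (hψzt.const_mul (2 * m₁)).add_const m₂
    simpa [mul_assoc] using this
  have hsx : HasDerivAt (fun a => Real.sqrt (2 * m₁ * ψ (z a t) + m₂))
      (2 * m₁ * (deriv ψ (z x t) * pdx z x t) / (2 * Real.sqrt (2 * m₁ * ψ (z x t) + m₂))) x :=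
    hgx.sqrt (hpos _).ne'
  have hst : HasDerivAt (fun s => Real.sqrt (2 * m₁ * ψ (z x s) + m₂))
      (2 * m₁ * (deriv ψ (z x t) * pdt z x t) / (2 * Real.sqrt (2 * m₁ * ψ (z x t) + m₂))) t :=
    hgt.sqrt (hpos _).ne'
  refine ⟨by ring, ?_, ?_⟩
  · -- second conjunct
    have e1 : ∀ a, (-2 * Real.sqrt (2 * m₁ * ψ (z a t) + m₂) / (deriv ψ (z a t) * pdx z a t))
            * (lam * deriv ψ (z a t) / Real.sqrt (2 * m₁ * ψ (z a t) + m₂)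
                * pdx z a t * ψ (z a t))
          + (lam * ψ (z a t) + m₁ / lam) = -lam * ψ (z a t) + m₁ / lam := by
      intro a
      have h1 := hψ' (z a t)
      have h2 := hzx a t
      have h3 := (hRpos a t).ne'
      field_simp
      ring
    have e2 : ∀ s, (-2 * Real.sqrt (2 * m₁ * ψ (z x s) + m₂) / (deriv ψ (z x s) * pdx z x s))
            * (lam * deriv ψ (z x s) / Real.sqrt (2 * m₁ * ψ (z x s) + m₂) * pdx z x s)
          + lam = -lam := by
      intro s
      have h1 := hψ' (z x s)
      have h2 := hzx x s
      have h3 := (hRpos x s).ne'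
      field_simp
      ring
    have hd1 : HasDerivAt (fun a => -lam * ψ (z a t) + m₁ / lam)
        (-lam * (deriv ψ (z x t) * pdx z x t)) x := (hψzx.const_mul (-lam)).add_const _
    have hd1' := hd1.congr_of_eventuallyEq (Filter.Eventually.of_forall fun a => e1 a)
    have hd2' := (hasDerivAt_const t (-lam)).congr_of_eventuallyEq
      (Filter.Eventually.of_forall fun s => e2 s)
    have E1 : pdx (fun a b =>
          (-2 * Real.sqrt (2 * m₁ * ψ (z a b) + m₂) / (deriv ψ (z a b) * pdx z a b))
            * (lam * deriv ψ (z a b) / Real.sqrt (2 * m₁ * ψ (z a b) + m₂)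
                * pdx z a b * ψ (z a b))
          + (lam * ψ (z a b) + m₁ / lam)) x t = -lam * (deriv ψ (z x t) * pdx z x t) :=
      hd1'.deriv
    have E2 : pdt (fun a b =>
          (-2 * Real.sqrt (2 * m₁ * ψ (z a b) + m₂) / (deriv ψ (z a b) * pdx z a b))
            * (lam * deriv ψ (z a b) / Real.sqrt (2 * m₁ * ψ (z a b) + m₂) * pdx z a b)
          + lam) x t = 0 := hd2'.deriv
    rw [E1, E2]
    field_simp
    ring
  · -- third conjunct
    have hF3 : HasDerivAt (fun a => lam * deriv ψ (z a t)
          / Real.sqrt (2 * m₁ * ψ (z a t) + m₂) * pdx z a t * ψ (z a t)) _ x :=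
      (((hψ'zx.const_mul lam).div hsx hRne).mul hx2).mul hψzx
    have hF4 : HasDerivAt (fun s => lam * deriv ψ (z x s)
          / Real.sqrt (2 * m₁ * ψ (z x s) + m₂) * pdx z x s) _ t :=
      ((hψ'zt.const_mul lam).div hst hRne).mul ht2
    have E3 : pdx (fun a b => lam * deriv ψ (z a b) / Real.sqrt (2 * m₁ * ψ (z a b) + m₂)
            * pdx z a b * ψ (z a b)) x t = _ := hF3.deriv
    have E4 : pdt (fun a b => lam * deriv ψ (z a b) / Real.sqrt (2 * m₁ * ψ (z a b) + m₂)
            * pdx z a b) x t = _ := hF4.deriv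
    rw [E3, E4, heq x t]
    simp only [Pi.div_apply, Pi.mul_apply]
    obtain ⟨R, hRdef⟩ : ∃ R, Real.sqrt (2 * m₁ * ψ (z x t) + m₂) = R := ⟨_, rfl⟩
    have hR2 : R ^ 2 = 2 * m₁ * ψ (z x t) + m₂ := by
      rw [← hRdef]; exact Real.sq_sqrt (hpos _).le
    rw [hRdef] at hRne ⊢
    rw [← hR2]
    have h1 := hψ' (z x t)
    have h2 := hzx x t
    field_simp
    linear_combination (lam ^ 2 * pdx z x t ^ 2 * deriv ψ (z x t) ^ 2) * hR2
end

section
/- Let z be a smooth solution of the short pulse equation z_{xt} = z + (1/6)(z³)_{xx} with z_x ≠ 0, and λ ≠ 0. Then the 1-forms ω₁ = λ z_x dx + (λ/2) z_x z² dt, ω₂ = λ dx + ((λ/2)z² + 1/λ) dt, ω₃ = z dt satisfy the structure equations dω₁ = ω₃ ∧ ω₂, dω₂ = ω₁ ∧ ω₃, dω₃ = ω₁ ∧ ω₂ of a pseudospherical surface, and ω₁ ∧ ω₂ = −z_x dx ∧ dt ≠ 0. -/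
/-- For a smooth solution `z` of the short pulse equation `z_{xt} = z + (1/6)(z³)_{xx}`
with `z_x ≠ 0` and `λ ≠ 0`, the forms `ω₁ = λ z_x dx + (λ/2) z_x z² dt`,
`ω₂ = λ dx + ((λ/2)z² + 1/λ) dt`, `ω₃ = z dt` satisfy the pseudospherical structure
equations `dω₁ = ω₃∧ω₂`, `dω₂ = ω₁∧ω₃`, `dω₃ = ω₁∧ω₂`, and `ω₁ ∧ ω₂ ≠ 0`
(its `dt∧dx` coefficient being `−z_x`). -/
theorem shortPulse_structure_equations
    (z : ℝ → ℝ → ℝ) (hz : ContDiff ℝ (⊤ : ℕ∞) (fun p : ℝ × ℝ => z p.1 p.2))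
    (lam : ℝ) (hlam : lam ≠ 0)
    (hzx : ∀ x t, pdx z x t ≠ 0)
    (hSP : ∀ x t, pdt (pdx z) x t =
      z x t + (1/6) * pdx (pdx (fun a b => (z a b) ^ 3)) x t) :
    ∀ x t : ℝ,
      -- dω₁ = ω₃ ∧ ω₂
      pdx (fun a b => (lam/2) * pdx z a b * (z a b) ^ 2) x t
        - pdt (fun a b => lam * pdx z a b) x t
        = 0 * ((lam/2) * (z x t) ^ 2 + 1/lam) - z x t * lam ∧
      -- dω₂ = ω₁ ∧ ω₃
      pdx (fun a b => (lam/2) * (z a b) ^ 2 + 1/lam) x t - pdt (fun _ _ => lam) x t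
        = lam * pdx z x t * z x t - (lam/2) * pdx z x t * (z x t) ^ 2 * 0 ∧
      -- dω₃ = ω₁ ∧ ω₂
      pdx (fun a b => z a b) x t - pdt (fun _ _ => (0:ℝ)) x t
        = lam * pdx z x t * ((lam/2) * (z x t) ^ 2 + 1/lam)
          - (lam/2) * pdx z x t * (z x t) ^ 2 * lam ∧
      -- ω₁ ∧ ω₂ is a nonzero multiple of the area form: its dt∧dx coefficient is −z_x
      (lam/2) * pdx z x t * (z x t) ^ 2 * lam
          - lam * pdx z x t * ((lam/2) * (z x t) ^ 2 + 1/lam) = -pdx z x t ∧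
      -pdx z x t ≠ 0 := by
  have hF : ContDiff ℝ (⊤ : ℕ∞) (fun p : ℝ × ℝ => z p.1 p.2) := hz
  have hx : ∀ s : ℝ, ContDiff ℝ (⊤ : ℕ∞) (fun u => z u s) := fun s =>
    hF.comp (contDiff_id.prodMk contDiff_const)
  have hpdx : ∀ a b : ℝ, pdx z a b
      = fderiv ℝ (fun p : ℝ × ℝ => z p.1 p.2) (a, b) (1, 0) := by
    intro a b
    have h1 : HasDerivAt (fun u : ℝ => (u, b)) ((1:ℝ), (0:ℝ)) a :=
      (hasDerivAt_id a).prodMk (hasDerivAt_const a b)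
    have h2 := (hF.differentiable (by simp) (a, b)).hasFDerivAt.comp_hasDerivAt a h1
    exact h2.deriv
  have hGt : ∀ a : ℝ, Differentiable ℝ (fun s => pdx z a s) := by
    intro a
    have h0 : ContDiff ℝ (⊤ : ℕ∞) (fun p : ℝ × ℝ =>
        fderiv ℝ (fun q : ℝ × ℝ => z q.1 q.2) p (1, 0)) :=
      (hF.fderiv_right (by simp)).clm_apply contDiff_const
    have h := (h0.comp ((contDiff_const : ContDiff ℝ (⊤ : ℕ∞) (fun _ : ℝ => a)).prodMk
      contDiff_id)).differentiable (by simp)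
    have heq : (fun s => pdx z a s)
        = fun s => fderiv ℝ (fun q : ℝ × ℝ => z q.1 q.2) (a, s) (1, 0) :=
      funext fun s => hpdx a s
    rw [heq]; exact h
  intro x t
  have hdz : ∀ a : ℝ, HasDerivAt (fun v => z v t) (pdx z a t) a :=
    fun a => ((hx t).differentiable (by simp) a).hasDerivAt
  have hCx : Differentiable ℝ (deriv (fun v => z v t)) := by
    have h0 : ContDiff ℝ (⊤ : ℕ∞) (fun u => fderiv ℝ (fun v => z v t) u 1) :=
      ((hx t).fderiv_right (by simp)).clm_apply contDiff_const
    have heq : deriv (fun v => z v t) = fun u => fderiv ℝ (fun v => z v t) u 1 :=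
      funext fun u => fderiv_apply_one_eq_deriv.symm
    rw [heq]; exact h0.differentiable (by simp)
  have hdz2 : ∀ a : ℝ, HasDerivAt (fun v => pdx z v t)
      (deriv (deriv (fun v => z v t)) a) a :=
    fun a => (hCx a).hasDerivAt
  -- first structure equation pieces
  have hA : pdx (fun a b => (lam/2) * pdx z a b * (z a b) ^ 2) x t
      = lam/2 * deriv (deriv (fun v => z v t)) x * z x t ^ 2
        + lam/2 * pdx z x t * ((2:ℕ) * z x t ^ 1 * pdx z x t) :=
    (((hdz2 x).const_mul (lam/2)).mul ((hdz x).pow 2)).deriv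
  have hB : pdt (fun a b => lam * pdx z a b) x t = lam * pdt (pdx z) x t :=
    deriv_const_mul lam ((hGt x) t)
  have e3 : ∀ a : ℝ, pdx (fun a b => (z a b) ^ 3) a t
      = (3:ℕ) * z a t ^ 2 * pdx z a t := fun a => ((hdz a).pow 3).deriv
  have hC : pdx (pdx (fun a b => (z a b) ^ 3)) x t
      = (3:ℕ) * ((2:ℕ) * z x t ^ 1 * pdx z x t) * pdx z x t
        + (3:ℕ) * z x t ^ 2 * deriv (deriv (fun v => z v t)) x := by
    have hfun : (fun u => pdx (fun a b => (z a b) ^ 3) u t)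
        = fun u => (3:ℕ) * z u t ^ 2 * pdx z u t := funext fun u => e3 u
    have h := ((((hdz x).pow 2).const_mul ((3:ℕ):ℝ)).mul (hdz2 x)).deriv
    show deriv (fun u => pdx (fun a b => (z a b) ^ 3) u t) x = _
    rw [hfun]
    exact h
  refine ⟨?_, ?_, ?_, ?_, ?_⟩
  · rw [hA, hB, hSP x t, hC]
    push_cast
    ring
  · have hD : pdx (fun a b => (lam/2) * (z a b) ^ 2 + 1/lam) x t
        = lam/2 * ((2:ℕ) * z x t ^ 1 * pdx z x t) :=
      ((((hdz x).pow 2).const_mul (lam/2)).add_const (1/lam)).deriv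
    have hE : pdt (fun _ _ => lam) x t = 0 := deriv_const t lam
    rw [hD, hE]
    push_cast
    ring
  · have h3 : pdx (fun a b => z a b) x t = pdx z x t := rfl
    have hE : pdt (fun _ _ => (0:ℝ)) x t = 0 := deriv_const t (0:ℝ)
    rw [h3, hE]
    field_simp
    ring
  · field_simp
    ring
  · exact neg_ne_zero.mpr (hzx x t)
end

section
/- Let m₁ ≠ 0, m₂ be real constants and z a smooth solution of the generalized short pulse equation z_{xt} = m₁(z + (1/6)(z³)_{xx}) − (m₂/(2m₁)) z_{xx} with 2m₁·((m₁z²−m₂)/(2m₁)) + m₂ = m₁²z² > 0 (i.e., z ≠ 0) and z_x ≠ 0. Then, with ψ(z) = (m₁²z² − m₂)/(2m₁) (case α = 1, β = 0 of Example 2.1), the forms ω₁ = λ z_x (dx + ψ dt), ω₂ = λ dx + (λψ + m₁/λ) dt, ω₃ = m₁ z dt satisfy the pseudospherical structure equations, and a = −2m₁ z/z_x, b = 1, c = 0 satisfy ac − b² = −1 together with the Codazzi equations for ω₁₃ = a ω₁ + ω₂, ω₂₃ = ω₁. -/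
/-- For a smooth solution `z` of the generalized short pulse equation
`z_{xt} = m₁(z + (1/6)(z³)_{xx}) − (m₂/(2m₁)) z_{xx}` with `m₁²z² > 0` and `z_x ≠ 0`,
setting `ψ(z) = (m₁²z² − m₂)/(2m₁)`, the forms `ω₁ = λ z_x (dx + ψ dt)`,
`ω₂ = λ dx + (λψ + m₁/λ) dt`, `ω₃ = m₁ z dt` satisfy the pseudospherical structure
equations, and `a = −2(m₁z)/((m₁z) z_x)` (Proposition 2's `−2√(2m₁ψ+m₂)/(ψ' z_x)`,
with `√(2m₁ψ+m₂) = m₁z` and `ψ' = m₁z`), `b = 1`, `c = 0` satisfy `ac − b² = −1`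
and the Codazzi equations for `ω₁₃ = a ω₁ + ω₂`, `ω₂₃ = ω₁`. -/
theorem generalizedShortPulse_structure_and_immersion
    (z : ℝ → ℝ → ℝ) (hz : ContDiff ℝ (⊤ : ℕ∞) (fun p : ℝ × ℝ => z p.1 p.2))
    (m₁ m₂ lam : ℝ) (hm₁ : m₁ ≠ 0) (hlam : lam ≠ 0)
    (hzpos : ∀ x t, m₁ ^ 2 * (z x t) ^ 2 > 0)
    (hzx : ∀ x t, pdx z x t ≠ 0)
    (hGSP : ∀ x t, pdt (pdx z) x t =
      m₁ * (z x t + (1/6) * pdx (pdx (fun a b => (z a b) ^ 3)) x t)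
        - (m₂ / (2 * m₁)) * pdx (pdx z) x t) :
    ∀ x t : ℝ,
      -- dω₁ = ω₃ ∧ ω₂ :  ω₁ = λ z_x dx + λ z_x ψ dt, ω₃ = m₁ z dt
      pdx (fun a b => lam * pdx z a b * ((m₁ ^ 2 * (z a b) ^ 2 - m₂) / (2 * m₁))) x t
        - pdt (fun a b => lam * pdx z a b) x t
        = 0 * (lam * ((m₁ ^ 2 * (z x t) ^ 2 - m₂) / (2 * m₁)) + m₁ / lam)
          - m₁ * z x t * lam ∧
      -- dω₂ = ω₁ ∧ ω₃
      pdx (fun a b => lam * ((m₁ ^ 2 * (z a b) ^ 2 - m₂) / (2 * m₁)) + m₁ / lam) x t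
        - pdt (fun _ _ => lam) x t
        = lam * pdx z x t * (m₁ * z x t)
          - lam * pdx z x t * ((m₁ ^ 2 * (z x t) ^ 2 - m₂) / (2 * m₁)) * 0 ∧
      -- dω₃ = ω₁ ∧ ω₂
      pdx (fun a b => m₁ * z a b) x t - pdt (fun _ _ => (0:ℝ)) x t
        = lam * pdx z x t * (lam * ((m₁ ^ 2 * (z x t) ^ 2 - m₂) / (2 * m₁)) + m₁ / lam)
          - lam * pdx z x t * ((m₁ ^ 2 * (z x t) ^ 2 - m₂) / (2 * m₁)) * lam ∧
      -- ac − b² = −1 with a = −2(m₁z)/((m₁z) z_x), b = 1, c = 0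
      (-2 * (m₁ * z x t) / (m₁ * z x t * pdx z x t)) * 0 - (1 : ℝ) ^ 2 = -1 ∧
      -- dω₁₃ = ω₃ ∧ ω₂₃ :  ω₁₃ = a ω₁ + ω₂, ω₂₃ = ω₁
      pdx (fun a b =>
          (-2 * (m₁ * z a b) / (m₁ * z a b * pdx z a b))
            * (lam * pdx z a b * ((m₁ ^ 2 * (z a b) ^ 2 - m₂) / (2 * m₁)))
          + (lam * ((m₁ ^ 2 * (z a b) ^ 2 - m₂) / (2 * m₁)) + m₁ / lam)) x t
        - pdt (fun a b =>
          (-2 * (m₁ * z a b) / (m₁ * z a b * pdx z a b)) * (lam * pdx z a b) + lam) x t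
        = 0 * (lam * pdx z x t * ((m₁ ^ 2 * (z x t) ^ 2 - m₂) / (2 * m₁)))
          - m₁ * z x t * (lam * pdx z x t) ∧
      -- dω₂₃ = −ω₃ ∧ ω₁₃
      pdx (fun a b => lam * pdx z a b * ((m₁ ^ 2 * (z a b) ^ 2 - m₂) / (2 * m₁))) x t
        - pdt (fun a b => lam * pdx z a b) x t
        = -(0 * ((-2 * (m₁ * z x t) / (m₁ * z x t * pdx z x t))
                  * (lam * pdx z x t * ((m₁ ^ 2 * (z x t) ^ 2 - m₂) / (2 * m₁)))
                + (lam * ((m₁ ^ 2 * (z x t) ^ 2 - m₂) / (2 * m₁)) + m₁ / lam))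
            - m₁ * z x t *
                ((-2 * (m₁ * z x t) / (m₁ * z x t * pdx z x t)) * (lam * pdx z x t)
                  + lam)) := by
  intro x t
  have hdz : Differentiable ℝ (fun p : ℝ × ℝ => z p.1 p.2) := hz.differentiable (by simp)
  -- x-derivative of z as a HasDerivAt
  have hx1 : ∀ a b : ℝ, HasDerivAt (fun u => z u b) (pdx z a b) a := fun a b =>
    ((hdz.comp (differentiable_id.prodMk (differentiable_const b))) a).hasDerivAt
  -- joint smoothness of pdx z
  have hfd : ∀ a b : ℝ, HasDerivAt (fun u => z u b)
      (fderiv ℝ (fun p : ℝ × ℝ => z p.1 p.2) (a, b) (1, 0)) a := fun a b =>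
    by have h := (hdz (id a, b)).hasFDerivAt.comp_hasDerivAt a
        (HasDerivAt.prodMk (hasDerivAt_id a) (hasDerivAt_const a b)); exact h
  have hF2 : ContDiff ℝ (⊤ : ℕ∞) (fun p : ℝ × ℝ => pdx z p.1 p.2) := by
    have h1 : ContDiff ℝ (⊤ : ℕ∞)
        (fun p : ℝ × ℝ => fderiv ℝ (fun q : ℝ × ℝ => z q.1 q.2) p (1, 0)) :=
      (hz.fderiv_right (by simp)).clm_apply contDiff_const
    have he : (fun p : ℝ × ℝ => pdx z p.1 p.2)
        = fun p : ℝ × ℝ => fderiv ℝ (fun q : ℝ × ℝ => z q.1 q.2) p (1, 0) := by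
      funext p
      exact (hfd p.1 p.2).deriv
    rw [he]; exact h1
  have hdF2 : Differentiable ℝ (fun p : ℝ × ℝ => pdx z p.1 p.2) := hF2.differentiable (by simp)
  have hx2 : ∀ a b : ℝ, HasDerivAt (fun u => pdx z u b) (pdx (pdx z) a b) a := fun a b =>
    ((hdF2.comp (differentiable_id.prodMk (differentiable_const b))) a).hasDerivAt
  have ht2 : ∀ a b : ℝ, HasDerivAt (fun s => pdx z a s) (pdt (pdx z) a b) b := fun a b =>
    ((hdF2.comp ((differentiable_const a).prodMk differentiable_id)) b).hasDerivAt
  -- m₁ z ≠ 0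
  have hznz : ∀ a b : ℝ, m₁ * z a b ≠ 0 := by
    intro a b h
    have h2 := hzpos a b
    nlinarith [h2, sq_nonneg (m₁ * z a b)]
  -- cube first x-derivative
  have hcube1 : ∀ a b : ℝ, pdx (fun a b => (z a b) ^ 3) a b = 3 * z a b ^ 2 * pdx z a b := by
    intro a b
    have h := ((hx1 a b).pow 3).deriv
    show deriv (fun u => z u b ^ 3) a = _
    refine h.trans ?_; push_cast; ring
  -- cube second x-derivative
  have hcube2 : pdx (pdx (fun a b => (z a b) ^ 3)) x t
      = 6 * z x t * (pdx z x t) ^ 2 + 3 * (z x t) ^ 2 * pdx (pdx z) x t := by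
    have hfe : (fun u => pdx (fun a b => (z a b) ^ 3) u t)
        = fun u => 3 * z u t ^ 2 * pdx z u t := funext fun u => hcube1 u t
    show deriv (fun u => pdx (fun a b => (z a b) ^ 3) u t) x = _
    rw [hfe]
    refine ((HasDerivAt.const_mul (3:ℝ) ((hx1 x t).pow 2)).mul (hx2 x t)).deriv.trans ?_
    push_cast [Pi.pow_apply]; ring
  -- expanded GSP
  have hGSPx : pdt (pdx z) x t
      = m₁ * z x t + m₁ * z x t * (pdx z x t) ^ 2
        + ((m₁ ^ 2 * (z x t) ^ 2 - m₂) / (2 * m₁)) * pdx (pdx z) x t := by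
    have h := hGSP x t
    rw [hcube2] at h
    rw [h]; field_simp; ring
  -- derivative of ψ ∘ z in x
  have hψ : HasDerivAt (fun u => (m₁ ^ 2 * (z u t) ^ 2 - m₂) / (2 * m₁))
      ((m₁ ^ 2 * (2 * z x t * pdx z x t)) / (2 * m₁)) x := by
    have h := (((hx1 x t).pow 2).const_mul (m₁ ^ 2)).sub_const m₂ |>.div_const (2 * m₁)
    refine HasDerivAt.congr_deriv h ?_
    push_cast; ring
  -- e1 : pdx of λ z_x ψ
  have e1 : pdx (fun a b => lam * pdx z a b * ((m₁ ^ 2 * (z a b) ^ 2 - m₂) / (2 * m₁))) x t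
      = lam * pdx (pdx z) x t * ((m₁ ^ 2 * (z x t) ^ 2 - m₂) / (2 * m₁))
        + lam * pdx z x t * ((m₁ ^ 2 * (2 * z x t * pdx z x t)) / (2 * m₁)) := by
    have h := (((hx2 x t).const_mul lam).mul hψ).deriv
    show deriv (fun u => lam * pdx z u t * ((m₁ ^ 2 * (z u t) ^ 2 - m₂) / (2 * m₁))) x = _
    exact h
  -- e2 : pdt of λ z_x
  have e2 : pdt (fun a b => lam * pdx z a b) x t = lam * pdt (pdx z) x t := by
    have h := ((ht2 x t).const_mul lam).deriv
    show deriv (fun s => lam * pdx z x s) t = _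
    rw [h]
  refine ⟨?_, ?_, ?_, ?_, ?_, ?_⟩
  · -- structure equation 1
    rw [e1, e2, hGSPx]
    field_simp; ring
  · -- structure equation 2
    have e3 : pdx (fun a b => lam * ((m₁ ^ 2 * (z a b) ^ 2 - m₂) / (2 * m₁)) + m₁ / lam) x t
        = lam * ((m₁ ^ 2 * (2 * z x t * pdx z x t)) / (2 * m₁)) := by
      have h := ((hψ.const_mul lam).add_const (m₁ / lam)).deriv
      show deriv (fun u => lam * ((m₁ ^ 2 * (z u t) ^ 2 - m₂) / (2 * m₁)) + m₁ / lam) x = _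
      rw [h]
    have e4 : pdt (fun _ _ => lam) x t = 0 := deriv_const t lam
    rw [e3, e4]
    field_simp; ring
  · -- structure equation 3
    have e5 : pdx (fun a b => m₁ * z a b) x t = m₁ * pdx z x t := ((hx1 x t).const_mul m₁).deriv
    have e6 : pdt (fun _ _ => (0:ℝ)) x t = 0 := deriv_const t (0:ℝ)
    rw [e5, e6]
    field_simp; ring
  · norm_num
  · -- Codazzi 1
    have e7 : pdx (fun a b =>
        (-2 * (m₁ * z a b) / (m₁ * z a b * pdx z a b))
          * (lam * pdx z a b * ((m₁ ^ 2 * (z a b) ^ 2 - m₂) / (2 * m₁)))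
        + (lam * ((m₁ ^ 2 * (z a b) ^ 2 - m₂) / (2 * m₁)) + m₁ / lam)) x t
        = -(lam * ((m₁ ^ 2 * (2 * z x t * pdx z x t)) / (2 * m₁))) := by
      have hfe : (fun u =>
          (-2 * (m₁ * z u t) / (m₁ * z u t * pdx z u t))
            * (lam * pdx z u t * ((m₁ ^ 2 * (z u t) ^ 2 - m₂) / (2 * m₁)))
          + (lam * ((m₁ ^ 2 * (z u t) ^ 2 - m₂) / (2 * m₁)) + m₁ / lam))
          = fun u => -(lam * ((m₁ ^ 2 * (z u t) ^ 2 - m₂) / (2 * m₁))) + m₁ / lam := by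
        funext u
        have h1 := hznz u t
        have h2 := hzx u t
        have h3 : z u t ≠ 0 := right_ne_zero_of_mul h1
        field_simp
        ring
      show deriv (fun u =>
          (-2 * (m₁ * z u t) / (m₁ * z u t * pdx z u t))
            * (lam * pdx z u t * ((m₁ ^ 2 * (z u t) ^ 2 - m₂) / (2 * m₁)))
          + (lam * ((m₁ ^ 2 * (z u t) ^ 2 - m₂) / (2 * m₁)) + m₁ / lam)) x = _
      rw [hfe]; exact (((hψ.const_mul lam).neg).add_const (m₁ / lam)).deriv
    have e8 : pdt (fun a b =>
        (-2 * (m₁ * z a b) / (m₁ * z a b * pdx z a b)) * (lam * pdx z a b) + lam) x t = 0 := by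
      have hfe : (fun s =>
          (-2 * (m₁ * z x s) / (m₁ * z x s * pdx z x s)) * (lam * pdx z x s) + lam)
          = fun _ => -lam := by
        funext s
        have h1 := hznz x s
        have h2 := hzx x s
        have h3 : z x s ≠ 0 := right_ne_zero_of_mul h1
        field_simp
        ring
      show deriv (fun s =>
          (-2 * (m₁ * z x s) / (m₁ * z x s * pdx z x s)) * (lam * pdx z x s) + lam) t = _
      rw [hfe, deriv_const]
    rw [e7, e8]
    have h1 := hznz x t
    field_simp
    ring
  · -- Codazzi 2
    rw [e1, e2, hGSPx]
    have h1 := hznz x t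
    have h2 := hzx x t
    have h3 : z x t ≠ 0 := right_ne_zero_of_mul h1
    field_simp
    ring
end
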